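/- Suppose the off-path set S^n contains every state at graph-distance one from the optimal path (every successor of an on-path state that is not itself on the path). If condition (1) holds (every on-path f-value is strictly less than every off-path f-value), then during A* search with this heuristic, no state outside the optimal path is ever expanded. -/
import Mathlib


/-- If the off-path set `Sn` contains every successor of an on-path state that is not
itself on the optimal path, and every on-path `f`-value is strictly smaller than every
off-path `f`-value (condition (1)), then A* best-first search never expands a state
outside the optimal path. -/
theorem astar_expands_only_optimal_path {S : Type*}
    (E : S → S → Prop) (goal : S → Prop)
    (So Sn : Set S) (g h : S → ℝ) (s₀ : S)
    (hgnn : ∀ s, 0 ≤ g s) (hhnn : ∀ s, 0 ≤ h s)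
    (hs₀ : s₀ ∈ So)
    (hdisj : Disjoint So Sn)
    -- `Sn` contains every state at distance one from the optimal path
    (hsucc : ∀ s ∈ So, ∀ s', E s s' → s' ∉ So → s' ∈ Sn)
    -- every non-goal on-path state has an on-path successor (the path continues to the goal)
    (hnext : ∀ s ∈ So, ¬ goal s → ∃ s', E s s' ∧ s' ∈ So)
    -- condition (1)
    (cond1 : ∀ s' ∈ So, ∀ s'' ∈ Sn, g s' + h s' < g s'' + h s'')
    -- an A* run of length `T`: open lists `O` and expanded states `e`
    (T : ℕ) (O : ℕ → Set S) (e : ℕ → S)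
    (hO0 : O 0 = {s₀})
    (hrun : ∀ t < T,
      e t ∈ O t ∧
      (∀ y ∈ O t, g (e t) + h (e t) ≤ g y + h y) ∧
      ¬ goal (e t) ∧
      O (t + 1) = (O t \ {e t}) ∪ {s' | E (e t) s'}) :
    ∀ t < T, e t ∈ So := by
  have key : ∀ t, t ≤ T → O t ⊆ So ∪ Sn ∧ ∃ s ∈ O t, s ∈ So := by
    intro t
    induction t with
    | zero =>
      intro _
      rw [hO0]
      refine ⟨?_, s₀, rfl, hs₀⟩
      intro x hx
      rw [Set.mem_singleton_iff] at hx
      subst hx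
      exact Or.inl hs₀
    | succ n ih =>
      intro hn
      obtain ⟨hsub, s, hsO, hsSo⟩ := ih (by omega)
      obtain ⟨heO, hmin, hng, hOn⟩ := hrun n (by omega)
      have heSo : e n ∈ So := by
        rcases hsub heO with h1 | h1
        · exact h1
        · exact absurd (hmin s hsO) (not_le.2 (cond1 s hsSo (e n) h1))
      obtain ⟨s', hE, hs'So⟩ := hnext (e n) heSo hng
      rw [hOn]
      refine ⟨?_, s', Or.inr hE, hs'So⟩
      intro x hx
      rcases hx with ⟨hx1, _⟩ | hx2
      · exact hsub hx1
      · by_cases hxSo : x ∈ So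
        · exact Or.inl hxSo
        · exact Or.inr (hsucc _ heSo x hx2 hxSo)
  intro t ht
  obtain ⟨hsub, s, hsO, hsSo⟩ := key t (le_of_lt ht)
  obtain ⟨heO, hmin, hng, hOn⟩ := hrun t ht
  rcases hsub heO with h1 | h1
  · exact h1
  · exact absurd (hmin s hsO) (not_le.2 (cond1 s hsSo (e t) h1))
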